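/- For every real x > 0 with x ≠ 1 and every real p with 0 < p ≤ 1/2, the chain of inequalities K(x)^{-p(1-p)}·W_p(x,1) ≤ Ĝ_p(x,1) ≤ L(x,1) ≤ Â_p(x,1) ≤ W_p(x,1) holds. -/

import Mathlib

/-!
Put `x = exp (2 * s)`. Each of the five quantities becomes `exp s` times an expression in
`sinh` and `cosh` that is even in `s`, so one may take `s > 0`. Dividing by the form
`p sinh s / sinh (p s)` of `Ĝ_p`, the chain becomes
`(1 - p) sinh s / sinh ((1 - p) s) ≤ cosh s ^ (2p(1 - p))` and
`1 ≤ sinh (p s) / (p s) ≤ cosh (p s) ≤ (1 - p) sinh s / sinh ((1 - p) s)`.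
The middle inequalities are `u ≤ sinh u ≤ u cosh u`; the last one follows from a product-to-sum
formula and the monotonicity of `sinh t / t`. For the first, `cosh t ^ (2p(1 - p))` times
`sinh ((1 - p) t) / sinh t` tends to `1 - p` as `t → 0⁺` and is increasing: the numerator of its
derivative, expanded into `sinh` of multiples of `t`, is again nonnegative by the monotonicity of
`sinh t / t`.
-/

open Real Set Filter Topology

theorem sinh_le_mul_cosh {t : ℝ} (ht : 0 ≤ t) : sinh t ≤ t * cosh t := by
  have hmono : MonotoneOn (fun u => u * cosh u - sinh u) (Ici 0) := by
    refine monotoneOn_of_hasDerivWithinAt_nonneg (f' := fun u => u * sinh u) (convex_Ici 0)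
      (by fun_prop) (fun u _ => ?_) (fun u hu => ?_)
    · refine (((hasDerivAt_id u).mul (hasDerivAt_cosh u)).sub
        (hasDerivAt_sinh u)).hasDerivWithinAt.congr_deriv ?_
      simp
    · rw [interior_Ici] at hu
      exact mul_nonneg hu.le (sinh_nonneg_iff.2 hu.le)
  simpa using hmono self_mem_Ici ht ht

theorem mul_sinh_le_mul_sinh {a b : ℝ} (ha : 0 ≤ a) (hab : a ≤ b) :
    b * sinh a ≤ a * sinh b := by
  have hmono : MonotoneOn (fun v => a * sinh v - v * sinh a) (Ici a) := by
    refine monotoneOn_of_hasDerivWithinAt_nonneg (f' := fun v => a * cosh v - sinh a)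
      (convex_Ici a) (by fun_prop) (fun v _ => ?_) (fun v hv => ?_)
    · refine (((hasDerivAt_sinh v).const_mul a).sub
        ((hasDerivAt_id v).mul_const (sinh a))).hasDerivWithinAt.congr_deriv ?_
      simp
    · rw [interior_Ici, mem_Ioi] at hv
      refine sub_nonneg.2 (calc sinh a ≤ a * cosh a := sinh_le_mul_cosh ha
        _ ≤ a * cosh v := by
          gcongr
          rw [cosh_le_cosh, abs_of_nonneg ha, abs_of_nonneg (ha.trans hv.le)]
          exact hv.le)
  have := hmono self_mem_Ici hab hab
  simp only at this
  linarith

theorem mul_sinh_mul_le_mul_sinh_mul {a b t : ℝ} (ha : 0 ≤ a) (hab : a ≤ b) (ht : 0 < t) :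
    b * sinh (a * t) ≤ a * sinh (b * t) := by
  have := mul_sinh_le_mul_sinh (mul_nonneg ha ht.le) (mul_le_mul_of_nonneg_right hab ht.le)
  exact (mul_le_mul_iff_left₀ ht).1 (by linarith)

theorem cosh_mul_sinh_le {p s : ℝ} (hp0 : 0 ≤ p) (hp1 : p ≤ 1 / 2) (hs : 0 < s) :
    cosh (p * s) * sinh ((1 - p) * s) ≤ (1 - p) * sinh s := by
  have hsum : 2 * (cosh (p * s) * sinh ((1 - p) * s)) = sinh s + sinh ((1 - 2 * p) * s) := by
    rw [show (1 - 2 * p) * s = (1 - p) * s - p * s by ring, sinh_sub,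
      show sinh s = sinh ((1 - p) * s + p * s) by ring_nf, sinh_add]
    ring
  have := mul_sinh_mul_le_mul_sinh_mul (a := 1 - 2 * p) (b := 1) (by linarith) (by linarith) hs
  rw [one_mul, one_mul] at this
  linarith

theorem cosh_sq_mul_sinh_le {p t : ℝ} (hp0 : 0 ≤ p) (hp1 : p ≤ 1 / 2) (ht : 0 < t) :
    cosh t ^ 2 * sinh ((1 - p) * t) ≤
      2 * p * (1 - p) * sinh t ^ 2 * sinh ((1 - p) * t)
        + (1 - p) * cosh t * cosh ((1 - p) * t) * sinh t := by
  have hq : 0 < 1 - p := by linarith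
  have hsum : 4 * (2 * p * (1 - p) * sinh t ^ 2 * sinh ((1 - p) * t)
        + (1 - p) * cosh t * cosh ((1 - p) * t) * sinh t - cosh t ^ 2 * sinh ((1 - p) * t))
      = p * (1 - 2 * p) * sinh ((3 - p) * t) + (2 - 3 * p + 2 * p ^ 2) * sinh ((1 + p) * t)
        - 2 * (1 + 2 * p * (1 - p)) * sinh ((1 - p) * t) := by
    rw [show (3 - p) * t = 2 * t + (1 - p) * t by ring,
      show (1 + p) * t = 2 * t - (1 - p) * t by ring, sinh_add, sinh_sub, sinh_two_mul,
      cosh_two_mul]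
    linear_combination (4 * p ^ 2 - 4 * p - 2) * sinh ((1 - p) * t) * cosh_sq_sub_sinh_sq t
  have h3 := mul_sinh_mul_le_mul_sinh_mul (b := 3 - p) hq.le (by linarith) ht
  have h1 := mul_sinh_mul_le_mul_sinh_mul (b := 1 + p) hq.le (by linarith) ht
  have hc3 : 0 ≤ p * (1 - 2 * p) := mul_nonneg hp0 (by linarith)
  have hc1 : 0 ≤ 2 - 3 * p + 2 * p ^ 2 := by nlinarith
  -- after bounding `sinh ((3 - p) * t)` and `sinh ((1 + p) * t)` below by multiples of
  -- `sinh ((1 - p) * t)`, the total coefficient of `sinh ((1 - p) * t)` is exactly zero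
  have : 0 ≤ (1 - p) * (p * (1 - 2 * p) * sinh ((3 - p) * t)
      + (2 - 3 * p + 2 * p ^ 2) * sinh ((1 + p) * t)
      - 2 * (1 + 2 * p * (1 - p)) * sinh ((1 - p) * t)) := by
    nlinarith [mul_le_mul_of_nonneg_left h3 hc3, mul_le_mul_of_nonneg_left h1 hc1]
  rw [← hsum] at this
  linarith [(mul_nonneg_iff_of_pos_left hq).1 this]

theorem tendsto_inv_mul_sinh_mul (a : ℝ) :
    Tendsto (fun t => t⁻¹ * sinh (a * t)) (𝓝[≠] 0) (𝓝 a) := by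
  have hderiv : HasDerivAt (fun t => sinh (a * t)) a 0 := by
    simpa using ((hasDerivAt_id (0 : ℝ)).const_mul a).sinh
  simpa using hderiv.tendsto_slope_zero

theorem tendsto_sinh_mul_div_sinh (a : ℝ) :
    Tendsto (fun t => sinh (a * t) / sinh t) (𝓝[≠] 0) (𝓝 a) := by
  have := (tendsto_inv_mul_sinh_mul a).div (tendsto_inv_mul_sinh_mul 1) one_ne_zero
  simp only [one_mul, div_one] at this
  refine this.congr' (eventually_nhdsWithin_of_forall fun t ht => ?_)
  exact mul_div_mul_left _ _ (inv_ne_zero ht)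

theorem monotoneOn_cosh_rpow_mul_sinh_mul_div_sinh {p : ℝ} (hp0 : 0 ≤ p) (hp1 : p ≤ 1 / 2) :
    MonotoneOn (fun t => cosh t ^ (2 * p * (1 - p)) * (sinh ((1 - p) * t) / sinh t)) (Ioi 0) := by
  set c := 2 * p * (1 - p)
  have hderiv : ∀ t, 0 < t → HasDerivAt (fun t => cosh t ^ c * (sinh ((1 - p) * t) / sinh t))
      (cosh t ^ (c - 1) / sinh t ^ 2 * (c * sinh t ^ 2 * sinh ((1 - p) * t)
        + (1 - p) * cosh t * cosh ((1 - p) * t) * sinh t - cosh t ^ 2 * sinh ((1 - p) * t))) t := by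
    intro t ht
    have hs : sinh t ≠ 0 := (sinh_pos_iff.2 ht).ne'
    refine (((hasDerivAt_cosh t).rpow_const (p := c) (Or.inl (cosh_pos t).ne')).mul
      ((((hasDerivAt_id t).const_mul (1 - p)).sinh).div (hasDerivAt_sinh t) hs)).congr_deriv ?_
    rw [show cosh t ^ c = cosh t ^ (c - 1) * cosh t by
      rw [← rpow_add_one (cosh_pos t).ne', sub_add_cancel]]
    simp only [id, Pi.div_apply]
    field_simp
    ring
  refine monotoneOn_of_hasDerivWithinAt_nonneg (convex_Ioi 0)
    (fun t ht => (hderiv t ht).continuousAt.continuousWithinAt)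
    (fun t ht => (hderiv t (by rwa [interior_Ioi] at ht)).hasDerivWithinAt) fun t ht => ?_
  rw [interior_Ioi, mem_Ioi] at ht
  exact mul_nonneg (by positivity) (sub_nonneg.2 (cosh_sq_mul_sinh_le hp0 hp1 ht))

theorem mul_sinh_le_cosh_rpow_mul_sinh {p s : ℝ} (hp0 : 0 ≤ p) (hp1 : p ≤ 1 / 2)
    (hs : 0 < s) :
    (1 - p) * sinh s ≤ cosh s ^ (2 * p * (1 - p)) * sinh ((1 - p) * s) := by
  have hlim : Tendsto (fun t => cosh t ^ (2 * p * (1 - p)) * (sinh ((1 - p) * t) / sinh t))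
      (𝓝[>] 0) (𝓝 (1 - p)) := by
    have hcont : Continuous fun t => cosh t ^ (2 * p * (1 - p)) :=
      continuous_cosh.rpow_const fun t => Or.inl (cosh_pos t).ne'
    simpa using ((hcont.tendsto 0).mono_left nhdsWithin_le_nhds).mul
      ((tendsto_sinh_mul_div_sinh (1 - p)).mono_left (nhdsGT_le_nhdsNE 0))
  have hle : 1 - p ≤ cosh s ^ (2 * p * (1 - p)) * (sinh ((1 - p) * s) / sinh s) :=
    le_of_tendsto hlim <| by
      filter_upwards [Ioo_mem_nhdsGT hs] with t ht
      exact monotoneOn_cosh_rpow_mul_sinh_mul_div_sinh hp0 hp1 ht.1 hs ht.2.le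
  rwa [mul_div_assoc', le_div_iff₀ (sinh_pos_iff.2 hs)] at hle

theorem hyperbolic_chain_of_pos {p s : ℝ} (hp0 : 0 < p) (hp1 : p ≤ 1 / 2) (hs : 0 < s) :
    (cosh s ^ 2) ^ (-(p * (1 - p))) *
        (p * (1 - p) * sinh s ^ 2 / (sinh (p * s) * sinh ((1 - p) * s))) ≤
      p * sinh s / sinh (p * s) ∧
    p * sinh s / sinh (p * s) ≤ sinh s / s ∧
    sinh s / s ≤ p * cosh (p * s) * sinh s / sinh (p * s) ∧
    p * cosh (p * s) * sinh s / sinh (p * s) ≤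
      p * (1 - p) * sinh s ^ 2 / (sinh (p * s) * sinh ((1 - p) * s)) := by
  have hps : 0 < p * s := mul_pos hp0 hs
  have hS : 0 < sinh s := sinh_pos_iff.2 hs
  have hA : 0 < sinh (p * s) := sinh_pos_iff.2 hps
  have hB : 0 < sinh ((1 - p) * s) := sinh_pos_iff.2 (mul_pos (by linarith) hs)
  have hK : 0 < cosh s ^ (2 * p * (1 - p)) := rpow_pos_of_pos (cosh_pos s) _
  refine ⟨?_, ?_, ?_, ?_⟩
  · have hKpow : (cosh s ^ 2) ^ (-(p * (1 - p))) = (cosh s ^ (2 * p * (1 - p)))⁻¹ := by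
      rw [← rpow_natCast, ← rpow_mul (cosh_pos s).le, ← rpow_neg (cosh_pos s).le]
      ring_nf
    rw [hKpow, inv_mul_le_iff₀ hK, div_le_iff₀ (mul_pos hA hB)]
    calc p * (1 - p) * sinh s ^ 2 = p * sinh s * ((1 - p) * sinh s) := by ring
      _ ≤ p * sinh s * (cosh s ^ (2 * p * (1 - p)) * sinh ((1 - p) * s)) :=
        mul_le_mul_of_nonneg_left (mul_sinh_le_cosh_rpow_mul_sinh hp0.le hp1 hs) (by positivity)
      _ = cosh s ^ (2 * p * (1 - p)) * (p * sinh s / sinh (p * s)) *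
          (sinh (p * s) * sinh ((1 - p) * s)) := by
        field_simp
  · rw [div_le_div_iff₀ hA hs]
    nlinarith [mul_le_mul_of_nonneg_left (self_le_sinh_iff.2 hps.le) hS.le]
  · rw [div_le_div_iff₀ hs hA]
    nlinarith [mul_le_mul_of_nonneg_left (sinh_le_mul_cosh hps.le) hS.le]
  · rw [div_le_div_iff₀ hA (mul_pos hA hB)]
    nlinarith [mul_le_mul_of_nonneg_left (cosh_mul_sinh_le hp0.le hp1 hs)
      (mul_pos (mul_pos hp0 hS) hA).le]

theorem hyperbolic_chain {p s : ℝ} (hp0 : 0 < p) (hp1 : p ≤ 1 / 2) (hs : s ≠ 0) :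
    (cosh s ^ 2) ^ (-(p * (1 - p))) *
        (p * (1 - p) * sinh s ^ 2 / (sinh (p * s) * sinh ((1 - p) * s))) ≤
      p * sinh s / sinh (p * s) ∧
    p * sinh s / sinh (p * s) ≤ sinh s / s ∧
    sinh s / s ≤ p * cosh (p * s) * sinh s / sinh (p * s) ∧
    p * cosh (p * s) * sinh s / sinh (p * s) ≤
      p * (1 - p) * sinh s ^ 2 / (sinh (p * s) * sinh ((1 - p) * s)) := by
  rcases hs.lt_or_gt with hs | hs
  · simpa [neg_div_neg_eq] using hyperbolic_chain_of_pos hp0 hp1 (neg_pos.2 hs)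
  · exact hyperbolic_chain_of_pos hp0 hp1 hs

noncomputable def kantorovich (x : ℝ) : ℝ := (x + 1) ^ 2 / (4 * x)

noncomputable def logMean (x : ℝ) : ℝ := (x - 1) / log x

noncomputable def wignerYanaseDyson (p x : ℝ) : ℝ :=
  p * (1 - p) * (x - 1) ^ 2 / ((x ^ p - 1) * (x ^ (1 - p) - 1))

noncomputable def hatGeomMean (p x : ℝ) : ℝ := p * x ^ (p / 2) * (x - 1) / (x ^ p - 1)

noncomputable def hatArithMean (p x : ℝ) : ℝ := p * (x ^ p + 1) * (x - 1) / (2 * (x ^ p - 1))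

theorem exp_two_mul_sub_one (t : ℝ) : exp (2 * t) - 1 = 2 * exp t * sinh t := by
  rw [sinh_eq, exp_neg, two_mul, exp_add]
  field_simp

theorem exp_two_mul_add_one (t : ℝ) : exp (2 * t) + 1 = 2 * exp t * cosh t := by
  rw [cosh_eq, exp_neg, two_mul, exp_add]
  field_simp

theorem exp_two_mul_rpow_sub_one (r s : ℝ) :
    exp (2 * s) ^ r - 1 = 2 * exp (r * s) * sinh (r * s) := by
  rw [← exp_mul, ← exp_two_mul_sub_one]
  ring_nf

theorem kantorovich_exp_two_mul (s : ℝ) : kantorovich (exp (2 * s)) = cosh s ^ 2 := by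
  rw [kantorovich, exp_two_mul_add_one, show 2 * s = s + s by ring, exp_add]
  field_simp
  ring

theorem logMean_exp_two_mul (s : ℝ) : logMean (exp (2 * s)) = exp s * (sinh s / s) := by
  rw [logMean, exp_two_mul_sub_one, log_exp]
  field_simp

theorem hatGeomMean_exp_two_mul (p s : ℝ) :
    hatGeomMean p (exp (2 * s)) = exp s * (p * sinh s / sinh (p * s)) := by
  rw [hatGeomMean, exp_two_mul_rpow_sub_one, exp_two_mul_sub_one, ← exp_mul,
    show 2 * s * (p / 2) = p * s by ring]
  field_simp

theorem hatArithMean_exp_two_mul (p s : ℝ) :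
    hatArithMean p (exp (2 * s)) = exp s * (p * cosh (p * s) * sinh s / sinh (p * s)) := by
  rw [hatArithMean, exp_two_mul_rpow_sub_one, exp_two_mul_sub_one, ← exp_mul,
    show 2 * s * p = 2 * (p * s) by ring, exp_two_mul_add_one]
  field_simp

theorem wignerYanaseDyson_exp_two_mul (p s : ℝ) :
    wignerYanaseDyson p (exp (2 * s)) =
      exp s * (p * (1 - p) * sinh s ^ 2 / (sinh (p * s) * sinh ((1 - p) * s))) := by
  rw [wignerYanaseDyson, exp_two_mul_rpow_sub_one, exp_two_mul_rpow_sub_one, exp_two_mul_sub_one,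
    show exp s = exp (p * s) * exp ((1 - p) * s) by rw [← exp_add]; ring_nf]
  field_simp

theorem chain_of_log_mean_bounds (x p : ℝ) (hx : 0 < x) (hx1 : x ≠ 1)
    (hp0 : 0 < p) (hp1 : p ≤ 1 / 2) :
    ((x + 1) ^ 2 / (4 * x)) ^ (-(p * (1 - p))) *
        (p * (1 - p) * (x - 1) ^ 2 / ((x ^ p - 1) * (x ^ (1 - p) - 1))) ≤
      p * x ^ (p / 2) * (x - 1) / (x ^ p - 1) ∧
    p * x ^ (p / 2) * (x - 1) / (x ^ p - 1) ≤ (x - 1) / Real.log x ∧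
    (x - 1) / Real.log x ≤ p * (x ^ p + 1) * (x - 1) / (2 * (x ^ p - 1)) ∧
    p * (x ^ p + 1) * (x - 1) / (2 * (x ^ p - 1)) ≤
      p * (1 - p) * (x - 1) ^ 2 / ((x ^ p - 1) * (x ^ (1 - p) - 1)) := by
  obtain ⟨s, rfl⟩ : ∃ s, x = exp (2 * s) :=
    ⟨log x / 2, by rw [mul_div_cancel₀ _ two_ne_zero, exp_log hx]⟩
  have hs : s ≠ 0 := by
    rintro rfl
    simp at hx1
  show kantorovich (exp (2 * s)) ^ (-(p * (1 - p))) * wignerYanaseDyson p (exp (2 * s)) ≤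
      hatGeomMean p (exp (2 * s)) ∧ hatGeomMean p (exp (2 * s)) ≤ logMean (exp (2 * s)) ∧
    logMean (exp (2 * s)) ≤ hatArithMean p (exp (2 * s)) ∧
    hatArithMean p (exp (2 * s)) ≤ wignerYanaseDyson p (exp (2 * s))
  rw [kantorovich_exp_two_mul, wignerYanaseDyson_exp_two_mul, hatGeomMean_exp_two_mul,
    logMean_exp_two_mul, hatArithMean_exp_two_mul]
  obtain ⟨h₁, h₂, h₃, h₄⟩ := hyperbolic_chain hp0 hp1 hs
  have he : 0 ≤ exp s := (exp_pos s).le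
  refine ⟨?_, mul_le_mul_of_nonneg_left h₂ he, mul_le_mul_of_nonneg_left h₃ he,
    mul_le_mul_of_nonneg_left h₄ he⟩
  rw [mul_left_comm]
  exact mul_le_mul_of_nonneg_left h₁ he
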